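/- For n ≥ 2 and δ = √((n+2)/n), the polynomial S_n(x) = C_{n−1}(x)·(2n+1+δxn) − C_{n−2}(x)·(n+1)·x (with C_m = C_m^{(3/2)}) has no root in common with R_n(x) = C_n(x) + δ·C_{n−1}(x); that is, at every root x_i of R_n, S_n(x_i) ≠ 0, so the weights w_i = 2(n+1)(2n+1)/(R_n'(x_i)·S_n(x_i)) of formula (15) are well defined. -/

import Mathlib

open Polynomial

/-- The Legendre polynomial of degree `n` (Rodrigues' formula). -/
noncomputable def legendre (n : ℕ) : Polynomial ℝ :=
  C ((1 : ℝ) / (2 ^ n * n.factorial)) * derivative^[n] ((X ^ 2 - 1) ^ n)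

/-- The Gegenbauer polynomial `C_n^{(3/2)}(x) = P_{n+1}'(x)`. -/
noncomputable def gegenbauer32 (n : ℕ) : Polynomial ℝ := derivative (legendre (n + 1))

/-- `δ = √((n+2)/n)`. -/
noncomputable def delta (n : ℕ) : ℝ := Real.sqrt (((n : ℝ) + 2) / (n : ℝ))

/-- Formula (12): the node polynomial `R_n = C_n + δ·C_{n−1}`. -/
noncomputable def Rpoly (n : ℕ) : Polynomial ℝ :=
  gegenbauer32 n + C (delta n) * gegenbauer32 (n - 1)

/-- Formula (13): the companion polynomial
`S_n = C_{n−1}·(2n+1+δxn) − C_{n−2}·(n+1)·x`. -/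
noncomputable def Spoly (n : ℕ) : Polynomial ℝ :=
  gegenbauer32 (n - 1) * (C (2 * (n : ℝ) + 1) + C (delta n * (n : ℝ)) * X) -
    gegenbauer32 (n - 2) * C ((n : ℝ) + 1) * X

/-!
Write `n = k + 2`. The three-term recurrence `(k+2) C_{k+2} = (2k+5) x C_{k+1} − (k+3) C_k` turns
`S_n` into `(2k+5)(1 − x²) C_{k+1} + (k+2) x R_n`, so at a root `x` of `R_n` we have
`S_n(x) = (2k+5)(1 − x²) C_{k+1}(x)`. Here `x ≠ ±1`, because `C_m(±1) = (±1)^m (m+1)(m+2)/2`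
and `δ < (k+4)/(k+2)` make `R_n(±1) ≠ 0`; and `C_{k+1}(x) ≠ 0`, since otherwise `R_n(x) = 0`
forces `C_{k+2}(x) = 0`, while by the recurrence two consecutive `C_m` never vanish together.
The recurrence itself comes from the Rodrigues-formula identities `P'_{n+1} = x P'_n + (n+1) P_n`
and `P'_{n+2} = (2n+3) P_{n+1} + P'_n`.
-/

lemma derivative_X_sq_sub_one_pow_succ (n : ℕ) :
    derivative ((X ^ 2 - 1 : ℝ[X]) ^ (n + 1)) =
      C (2 * ((n : ℝ) + 1)) * ((X ^ 2 - 1) ^ n * X) := by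
  rw [derivative_pow]
  simp only [derivative_sub, derivative_X_pow, derivative_one, map_mul, map_add, map_natCast,
    map_one, map_ofNat]
  push_cast
  ring

lemma derivative_derivative_X_sq_sub_one_pow_add_two (n : ℕ) :
    derivative (derivative ((X ^ 2 - 1 : ℝ[X]) ^ (n + 2))) =
      C (2 * ((n : ℝ) + 2) * (2 * n + 3)) * (X ^ 2 - 1) ^ (n + 1) +
        C (4 * ((n : ℝ) + 1) * (n + 2)) * (X ^ 2 - 1) ^ n := by
  rw [derivative_X_sq_sub_one_pow_succ, derivative_C_mul, derivative_mul,
    derivative_X_sq_sub_one_pow_succ, derivative_X]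
  simp only [map_mul, map_add, map_natCast, map_one, map_ofNat]
  push_cast
  ring

lemma legendre_coeff_succ_mul (n : ℕ) :
    1 / (2 ^ (n + 1) * ((n + 1).factorial : ℝ)) * (2 * ((n : ℝ) + 1)) =
      1 / (2 ^ n * (n.factorial : ℝ)) := by
  rw [Nat.factorial_succ, pow_succ]
  push_cast
  field_simp

lemma derivative_legendre_succ (n : ℕ) :
    derivative (legendre (n + 1)) =
      X * derivative (legendre n) + ((n : ℝ[X]) + 1) * legendre n := by
  simp only [legendre, derivative_C_mul, ← Function.iterate_succ_apply' derivative]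
  rw [Function.iterate_succ_apply, derivative_X_sq_sub_one_pow_succ, iterate_derivative_C_mul,
    iterate_derivative_mul_X, ← mul_assoc, ← C_mul, legendre_coeff_succ_mul]
  simp only [add_tsub_cancel_right, nsmul_eq_mul, Nat.cast_add, Nat.cast_one]
  ring

lemma derivative_legendre_add_two (n : ℕ) :
    derivative (legendre (n + 2)) =
      (2 * (n : ℝ[X]) + 3) * legendre (n + 1) + derivative (legendre n) := by
  have h₁ := legendre_coeff_succ_mul (n + 1)
  simp only [add_assoc, Nat.reduceAdd] at h₁
  simp only [legendre, derivative_C_mul, ← Function.iterate_succ_apply' derivative]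
  rw [Function.iterate_succ_apply, Function.iterate_succ_apply,
    derivative_derivative_X_sq_sub_one_pow_add_two, iterate_map_add, iterate_derivative_C_mul,
    iterate_derivative_C_mul, ← legendre_coeff_succ_mul n, ← h₁]
  simp only [map_mul, map_add, map_natCast, map_one, map_ofNat, Nat.succ_eq_add_one]
  push_cast
  ring

lemma legendre_one : legendre 1 = X := by
  simp [legendre, derivative_pow, ← mul_assoc, ← C_mul]

lemma gegenbauer32_zero : gegenbauer32 0 = 1 := by
  rw [gegenbauer32, legendre_one, derivative_X]

lemma gegenbauer32_one : gegenbauer32 1 = 3 * X := by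
  rw [gegenbauer32, derivative_legendre_succ, legendre_one, derivative_X]
  push_cast
  ring

lemma gegenbauer32_add_two (k : ℕ) :
    ((k : ℝ[X]) + 2) * gegenbauer32 (k + 2) =
      (2 * (k : ℝ[X]) + 5) * X * gegenbauer32 (k + 1) - ((k : ℝ[X]) + 3) * gegenbauer32 k := by
  have hA := derivative_legendre_succ (k + 2)
  have hI := derivative_legendre_add_two (k + 1)
  simp only [gegenbauer32] at *
  push_cast at hA hI
  linear_combination (2 * (k : ℝ[X]) + 5) * hA - ((k : ℝ[X]) + 3) * hI

lemma gegenbauer32_eval_of_sq_eq_one {ε : ℝ} (hε : ε ^ 2 = 1) (m : ℕ) :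
    (gegenbauer32 m).eval ε = ε ^ m * (((m : ℝ) + 1) * (m + 2) / 2) := by
  induction m using Nat.twoStepInduction with
  | zero => simp [gegenbauer32_zero]
  | one =>
    simp only [gegenbauer32_one, eval_mul, eval_ofNat, eval_X, pow_one, Nat.cast_one]
    ring
  | more k ih₀ ih₁ =>
    have h := congrArg (eval ε) (gegenbauer32_add_two k)
    simp only [eval_mul, eval_add, eval_sub, eval_X, eval_natCast, eval_ofNat, ih₀, ih₁] at h
    push_cast at h ⊢
    have hk : (k : ℝ) + 2 ≠ 0 := by positivity
    apply mul_left_cancel₀ hk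
    linear_combination h + (k + 3) * ε ^ k * ((k + 1) * (k + 2) / 2) * hε

lemma gegenbauer32_eval_ne_zero_or (m : ℕ) (x : ℝ) :
    (gegenbauer32 m).eval x ≠ 0 ∨ (gegenbauer32 (m + 1)).eval x ≠ 0 := by
  induction m with
  | zero => simp [gegenbauer32_zero]
  | succ k ih =>
    by_contra! h
    have hrec := congrArg (eval x) (gegenbauer32_add_two k)
    simp only [eval_mul, eval_add, eval_sub, eval_X, eval_natCast, eval_ofNat, h.1, h.2] at hrec
    have hk : ((k : ℝ) + 3) * (gegenbauer32 k).eval x = 0 := by linarith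
    exact ih.elim (· ((mul_eq_zero.mp hk).resolve_left (by positivity))) (· h.1)

lemma Rpoly_add_two_eval (k : ℕ) (x : ℝ) :
    (Rpoly (k + 2)).eval x =
      (gegenbauer32 (k + 2)).eval x + delta (k + 2) * (gegenbauer32 (k + 1)).eval x := by
  simp [Rpoly]

lemma Spoly_add_two_eq (k : ℕ) :
    Spoly (k + 2) =
      (2 * (k : ℝ[X]) + 5) * (1 - X ^ 2) * gegenbauer32 (k + 1) +
        ((k : ℝ[X]) + 2) * X * Rpoly (k + 2) := by
  simp only [Spoly, Rpoly, Nat.add_sub_cancel, map_mul, map_add, map_one, map_ofNat, map_natCast]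
  push_cast
  linear_combination (-X) * gegenbauer32_add_two k

lemma delta_add_two_mul_lt (k : ℕ) : delta (k + 2) * ((k : ℝ) + 2) < k + 4 := by
  have hk : (0 : ℝ) < k + 2 := by positivity
  rw [← lt_div_iff₀ hk, delta, Real.sqrt_lt' (by positivity)]
  push_cast
  rw [div_pow, div_lt_div_iff₀ hk (by positivity)]
  nlinarith

lemma Rpoly_add_two_eval_one_pos (k : ℕ) : 0 < (Rpoly (k + 2)).eval 1 := by
  rw [Rpoly_add_two_eval, gegenbauer32_eval_of_sq_eq_one (one_pow 2),
    gegenbauer32_eval_of_sq_eq_one (one_pow 2)]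
  have : 0 ≤ delta (k + 2) := Real.sqrt_nonneg _
  positivity

lemma Rpoly_add_two_eval_neg_one_ne_zero (k : ℕ) : (Rpoly (k + 2)).eval (-1) ≠ 0 := by
  have hε : (-1 : ℝ) ^ 2 = 1 := by norm_num
  rw [Rpoly_add_two_eval, gegenbauer32_eval_of_sq_eq_one hε, gegenbauer32_eval_of_sq_eq_one hε]
  have hpos : 0 < ((k : ℝ) + 3) * (k + 4 - delta (k + 2) * (k + 2)) / 2 := by
    have := sub_pos.2 (delta_add_two_mul_lt k)
    positivity
  convert mul_ne_zero (pow_ne_zero k (neg_ne_zero.2 one_ne_zero)) hpos.ne' using 1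
  push_cast
  ring

/-- For `n ≥ 2`, the polynomials `S_n` and `R_n` share no root: at every root `x_i` of `R_n`
one has `S_n(x_i) ≠ 0`, so the weights `w_i = 2(n+1)(2n+1)/(R_n'(x_i)·S_n(x_i))` of formula
(15) are well defined. -/
theorem stmt_13 (n : ℕ) (hn : 2 ≤ n) :
    ∀ x : ℝ, (Rpoly n).eval x = 0 → (Spoly n).eval x ≠ 0 := by
  obtain ⟨k, rfl⟩ : ∃ k, n = k + 2 := ⟨n - 2, by omega⟩
  intro x hR
  have hx₁ : x ≠ 1 := by rintro rfl; exact (Rpoly_add_two_eval_one_pos k).ne' hR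
  have hx₂ : x ≠ -1 := by rintro rfl; exact Rpoly_add_two_eval_neg_one_ne_zero k hR
  have hC : (gegenbauer32 (k + 1)).eval x ≠ 0 := by
    intro h
    rw [Rpoly_add_two_eval, h, mul_zero, add_zero] at hR
    exact (gegenbauer32_eval_ne_zero_or (k + 1) x).elim (· h) (· hR)
  have hS : (Spoly (k + 2)).eval x = (2 * k + 5) * (1 - x ^ 2) * (gegenbauer32 (k + 1)).eval x := by
    simp [Spoly_add_two_eq, hR]
  have hx : 1 - x ^ 2 ≠ 0 := by
    rw [sub_ne_zero, ne_comm, Ne, sq_eq_one_iff]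
    tauto
  rw [hS]
  exact mul_ne_zero (mul_ne_zero (by positivity) hx) hC
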